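/- Let A be the real 6×6 matrix A = (1/2)·M where M has rows (0, −1−2√2, 0, −√2, 0, −1−√2), (1+2√2, 0, √2, 0, 1+√2, 0), (0, √2, 0, 1+√2, 0, −1), (−√2, 0, −1−√2, 0, 1, 0), (0, 1+√2, 0, −1, 0, 2+√2), (−1−√2, 0, 1, 0, −2−√2, 0). Set ω₁ := (−1 + √(4 + 3√2))/2 and ω₂ := (1 + √(4 + 3√2))/2. Then the characteristic polynomial of A equals λ²·(λ² + ω₁²)·(λ² + ω₂²); i.e., the eigenvalues of A are 0 with algebraic multiplicity 2 and the two complex-conjugate pairs ±iω₁ and ±iω₂. -/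

import Mathlib

open Polynomial

/-- The coefficient matrix of the linearized equations of motion about the collinear ground
state `↓↑↑` for the standard couplings `J₁ = −1/2`, `J₂ = (1+√2)/2`, `J₃ = √2/2`. -/
noncomputable def linMatA : Matrix (Fin 6) (Fin 6) ℝ :=
  (1 / 2 : ℝ) •
    !![0, -1 - 2 * Real.sqrt 2, 0, -Real.sqrt 2, 0, -1 - Real.sqrt 2;
       1 + 2 * Real.sqrt 2, 0, Real.sqrt 2, 0, 1 + Real.sqrt 2, 0;
       0, Real.sqrt 2, 0, 1 + Real.sqrt 2, 0, -1;
       -Real.sqrt 2, 0, -1 - Real.sqrt 2, 0, 1, 0;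
       0, 1 + Real.sqrt 2, 0, -1, 0, 2 + Real.sqrt 2;
       -1 - Real.sqrt 2, 0, 1, 0, -2 - Real.sqrt 2, 0]

/-!
`A` only couples even to odd coordinates, and after listing the even coordinates first it reads
`[[0, P], [-P, 0]]` for a `3 × 3` matrix `P`. For such a block matrix
`det (λ - A) = det (λ² + P²)`, so `χ_A(λ) = χ_{-P²}(λ²)`. A direct computation gives
`χ_{-P²}(μ) = μ (μ² + (5 + 3√2)/2 · μ + 9(3 + 2√2)/16)`, and with `t = √(4 + 3√2)` the numbers
`ω₁ = (t - 1)/2`, `ω₂ = (t + 1)/2` satisfy `ω₁² + ω₂² = (1 + t²)/2` and `ω₁ ω₂ = (t² - 1)/4`,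
so the quadratic factor is `(μ + ω₁²)(μ + ω₂²)`.
-/

open Matrix

def finSumFinEquivInterleave (n : ℕ) : Fin n ⊕ Fin n ≃ Fin (2 * n) where
  toFun := Sum.elim (fun k => ⟨2 * k, by omega⟩) (fun k => ⟨2 * k + 1, by omega⟩)
  invFun j := if j.1 % 2 = 0 then .inl ⟨j / 2, by omega⟩ else .inr ⟨j / 2, by omega⟩
  left_inv := by
    rintro (k | k) <;> simp [Fin.ext_iff]
    omega
  right_inv j := by
    by_cases h : j.1 % 2 = 0 <;> simp [h, Fin.ext_iff] <;> omega

namespace Matrix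

variable {n : Type*} [Fintype n] [DecidableEq n]

theorem det_fromBlocks_scalar_neg_self {S : Type*} [CommRing S] {t : S} (ht : IsRegular t)
    (B : Matrix n n S) :
    (fromBlocks (scalar n t) (-B) B (scalar n t)).det = (scalar n (t ^ 2) + B * B).det := by
  have hfactor : fromBlocks (scalar n t) (-B) B (scalar n t) * fromBlocks (scalar n t) 0 (-B) 1 =
      fromBlocks (scalar n (t ^ 2) + B * B) (-B) 0 (scalar n t) := by
    rw [fromBlocks_multiply]
    congr 1
    · simp [sq]
    · simp
    · rw [mul_neg, ← (scalar_commute t (Commute.all t) B).eq]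
      simp
    · simp
  have hdet := congrArg det hfactor
  rw [det_mul, det_fromBlocks_zero₁₂, det_fromBlocks_zero₂₁, det_one, mul_one, scalar_apply,
    det_diagonal, Finset.prod_const] at hdet
  exact (ht.pow _).2 hdet

theorem charpoly_fromBlocks_zero_neg {R : Type*} [CommRing R] (P : Matrix n n R) :
    (fromBlocks 0 P (-P) 0).charpoly = (-(P * P)).charpoly.comp (X ^ 2) := by
  rw [charpoly, charmatrix_fromBlocks, charpoly, ← coe_compRingHom_apply, RingHom.map_det]
  have hneg : -(-P).map C = P.map C := by ext; simp
  simp only [charmatrix, map_zero, sub_zero, hneg]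
  rw [det_fromBlocks_scalar_neg_self isRegular_X]
  congr 1
  ext i j : 1
  by_cases h : i = j <;> simp [h, mul_apply]

end Matrix

noncomputable def linMatBlock : Matrix (Fin 3) (Fin 3) ℝ :=
  (1 / 2 : ℝ) •
    !![-1 - 2 * Real.sqrt 2, -Real.sqrt 2, -1 - Real.sqrt 2;
       Real.sqrt 2, 1 + Real.sqrt 2, -1;
       1 + Real.sqrt 2, -1, 2 + Real.sqrt 2]

theorem reindex_linMatA :
    reindex (finSumFinEquivInterleave 3).symm (finSumFinEquivInterleave 3).symm linMatA =
      fromBlocks 0 linMatBlock (-linMatBlock) 0 := by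
  ext (i | i) (j | j) <;> fin_cases i <;> fin_cases j <;>
    simp [linMatA, linMatBlock, finSumFinEquivInterleave] <;> ring

theorem charpoly_neg_linMatBlock_mul_self :
    (-(linMatBlock * linMatBlock)).charpoly =
      X * (X ^ 2 + C ((5 + 3 * Real.sqrt 2) / 2) * X + C (9 * (3 + 2 * Real.sqrt 2) / 16)) := by
  have hs : Real.sqrt 2 ^ 2 = 2 := Real.sq_sqrt (by norm_num)
  refine Polynomial.funext fun r => ?_
  rw [eval_charpoly, det_fin_three]
  simp [linMatBlock]
  linear_combination (r * (13 + 6 * Real.sqrt 2 + Real.sqrt 2 ^ 2) / 16 + r ^ 2 / 2) * hs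

/-- the characteristic polynomial of the linearization matrix `A` is
`λ²(λ² + ω₁²)(λ² + ω₂²)` with `ω₁ = (−1+√(4+3√2))/2` and `ω₂ = (1+√(4+3√2))/2`;
its eigenvalues are `0` (multiplicity 2) and the pairs `±iω₁`, `±iω₂`. -/
theorem charpoly_linMatA :
    linMatA.charpoly =
      X ^ 2 * (X ^ 2 + C (((-1 + Real.sqrt (4 + 3 * Real.sqrt 2)) / 2) ^ 2))
        * (X ^ 2 + C (((1 + Real.sqrt (4 + 3 * Real.sqrt 2)) / 2) ^ 2)) := by
  set t := Real.sqrt (4 + 3 * Real.sqrt 2)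
  have hs : Real.sqrt 2 ^ 2 = 2 := Real.sq_sqrt (by norm_num)
  have ht : t ^ 2 = 4 + 3 * Real.sqrt 2 := Real.sq_sqrt (by positivity)
  have hsum : ((-1 + t) / 2) ^ 2 + ((1 + t) / 2) ^ 2 = (5 + 3 * Real.sqrt 2) / 2 := by
    linear_combination ht / 2
  have hprod : ((-1 + t) / 2) ^ 2 * ((1 + t) / 2) ^ 2 = 9 * (3 + 2 * Real.sqrt 2) / 16 := by
    linear_combination (t ^ 2 + 2 + 3 * Real.sqrt 2) / 16 * ht + 9 / 16 * hs
  rw [← charpoly_reindex (finSumFinEquivInterleave 3).symm, reindex_linMatA,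
    charpoly_fromBlocks_zero_neg, charpoly_neg_linMatBlock_mul_self, ← hsum, ← hprod]
  simp only [mul_comp, add_comp, X_comp, C_comp, pow_comp, C_add, C_mul]
  ring
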